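/- arXiv:2603.15144 — 2 statements merged into one kernel-verified Lean document; each statement's English description precedes it below -/
import Mathlib

section
/- Let E be a real inner product space, let 𝒢 be a finite index set with |𝒢| = G ≥ 1, and let κ ≥ 0, ζ ≥ 0. For each i ∈ 𝒢 let g_i, u_i, v_i, q_i ∈ E and set c_i = g_i − u_i, p_i = u_i − v_i, m_i = v_i − q_i, ḡ = (1/G)·Σ_{i∈𝒢} g_i, v̄ = (1/G)·Σ_{i∈𝒢} v_i, q̄ = (1/G)·Σ_{i∈𝒢} q_i. Assume the heterogeneity bound (1/G)·Σ_{i∈𝒢} ‖q_i − q̄‖² ≤ ζ², and let a ∈ E satisfy ‖a − ḡ‖² ≤ (κ/G)·Σ_{i∈𝒢} ‖g_i − ḡ‖². Then ‖a − q̄‖² ≤ (4(8κ+1)/G)·Σ_{i∈𝒢}‖c_i‖² + (4(8κ+1)/G)·Σ_{i∈𝒢}‖p_i‖² + (32κ/G)·Σ_{i∈𝒢}‖m_i‖² + 4·‖v̄ − q̄‖² + 32κ·ζ². -/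
/-!
Write `a - q̄ = (a - ḡ) + c̄ + p̄ + (v̄ - q̄)` and use `‖x + y + z + w‖² ≤ 4 Σ ‖·‖²`. The means `c̄`
and `p̄` are controlled by Jensen's inequality. For `a - ḡ`, the robustness bound is applied after
enlarging the spread of the `g i` around their mean `ḡ` to their spread around `q̄` (the mean
minimises the sum of squared distances), and `g i - q̄ = c i + p i + m i + (q i - q̄)`.
-/

open Finset

theorem norm_sum_sq_le_card_mul_sum_norm_sq {ι E : Type*} [SeminormedAddCommGroup E]
    (s : Finset ι) (x : ι → E) :
    ‖∑ i ∈ s, x i‖ ^ 2 ≤ #s * ∑ i ∈ s, ‖x i‖ ^ 2 :=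
  (pow_le_pow_left₀ (norm_nonneg _) (norm_sum_le s x) 2).trans (sq_sum_le_card_mul_sum_sq ..)

theorem norm_add_add_add_sq_le {E : Type*} [SeminormedAddCommGroup E] (x y z w : E) :
    ‖x + y + z + w‖ ^ 2 ≤ 4 * (‖x‖ ^ 2 + ‖y‖ ^ 2 + ‖z‖ ^ 2 + ‖w‖ ^ 2) := by
  simpa [Fin.sum_univ_four, add_assoc] using norm_sum_sq_le_card_mul_sum_norm_sq univ ![x, y, z, w]

theorem sum_norm_add_add_add_sq_le {ι E : Type*} [SeminormedAddCommGroup E] (s : Finset ι)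
    (x y z w : ι → E) :
    ∑ i ∈ s, ‖x i + y i + z i + w i‖ ^ 2 ≤ 4 * (∑ i ∈ s, ‖x i‖ ^ 2 + ∑ i ∈ s, ‖y i‖ ^ 2
      + ∑ i ∈ s, ‖z i‖ ^ 2 + ∑ i ∈ s, ‖w i‖ ^ 2) := by
  simp only [mul_sum, ← sum_add_distrib]
  exact sum_le_sum fun i _ => norm_add_add_add_sq_le ..

section Mean

variable {ι E : Type*} [Fintype ι]

theorem norm_mean_sq_le [SeminormedAddCommGroup E] [NormedSpace ℝ E] (x : ι → E) :
    ‖(Fintype.card ι : ℝ)⁻¹ • ∑ i, x i‖ ^ 2 ≤ (Fintype.card ι : ℝ)⁻¹ * ∑ i, ‖x i‖ ^ 2 := by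
  set n : ℝ := (Fintype.card ι : ℝ)
  calc ‖n⁻¹ • ∑ i, x i‖ ^ 2 = n⁻¹ ^ 2 * ‖∑ i, x i‖ ^ 2 := by
        rw [norm_smul, mul_pow, Real.norm_eq_abs, sq_abs]
    _ ≤ n⁻¹ ^ 2 * (n * ∑ i, ‖x i‖ ^ 2) := by
        gcongr; simpa using norm_sum_sq_le_card_mul_sum_norm_sq univ x
    _ = n⁻¹ * ∑ i, ‖x i‖ ^ 2 := by
        rcases eq_or_ne n 0 with hn | hn
        · simp [hn]
        · field_simp

theorem sum_sub_mean_eq_zero [AddCommGroup E] [Module ℝ E] (x : ι → E) :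
    ∑ i, (x i - (Fintype.card ι : ℝ)⁻¹ • ∑ j, x j) = 0 := by
  rcases isEmpty_or_nonempty ι with hι | hι
  · simp
  · rw [sum_sub_distrib, sum_const, card_univ, ← Nat.cast_smul_eq_nsmul ℝ, smul_smul,
      mul_inv_cancel₀ (by positivity), one_smul, sub_self]

variable [NormedAddCommGroup E] [InnerProductSpace ℝ E]

theorem sum_norm_sub_sq_eq_sum_norm_sub_mean_sq_add (x : ι → E) (b : E) :
    ∑ i, ‖x i - b‖ ^ 2 = ∑ i, ‖x i - (Fintype.card ι : ℝ)⁻¹ • ∑ j, x j‖ ^ 2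
      + Fintype.card ι * ‖(Fintype.card ι : ℝ)⁻¹ • ∑ j, x j - b‖ ^ 2 := by
  have hcentred := sum_sub_mean_eq_zero x
  set μ := (Fintype.card ι : ℝ)⁻¹ • ∑ j, x j
  have hsplit (i : ι) :
      ‖x i - b‖ ^ 2 = ‖x i - μ‖ ^ 2 + 2 * inner ℝ (x i - μ) (μ - b) + ‖μ - b‖ ^ 2 := by
    rw [← norm_add_sq_real, sub_add_sub_cancel]
  simp only [hsplit, sum_add_distrib, ← mul_sum, ← sum_inner, hcentred, inner_zero_left,
    mul_zero, add_zero, sum_const, card_univ, nsmul_eq_mul]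

theorem sum_norm_sub_mean_sq_le (x : ι → E) (b : E) :
    ∑ i, ‖x i - (Fintype.card ι : ℝ)⁻¹ • ∑ j, x j‖ ^ 2 ≤ ∑ i, ‖x i - b‖ ^ 2 := by
  rw [sum_norm_sub_sq_eq_sum_norm_sub_mean_sq_add x b]
  exact le_add_of_nonneg_right (by positivity)

end Mean

theorem stmt_4_general {E : Type*} [NormedAddCommGroup E] [InnerProductSpace ℝ E]
    {ι : Type*} [Fintype ι]
    (κ ζ : ℝ) (hκ : 0 ≤ κ)
    (g u v q : ι → E) (a : E)
    (c p m : ι → E)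
    (hc : ∀ i, c i = g i - u i) (hp : ∀ i, p i = u i - v i)
    (hm : ∀ i, m i = v i - q i)
    (ghat vhat qhat : E)
    (hghat : ghat = (1 / (Fintype.card ι : ℝ)) • ∑ i, g i)
    (hvhat : vhat = (1 / (Fintype.card ι : ℝ)) • ∑ i, v i)
    (hhet : (1 / (Fintype.card ι : ℝ)) * ∑ i, ‖q i - qhat‖ ^ 2 ≤ ζ ^ 2)
    (hrobust : ‖a - ghat‖ ^ 2 ≤ (κ / (Fintype.card ι : ℝ)) * ∑ i, ‖g i - ghat‖ ^ 2) :
    ‖a - qhat‖ ^ 2 ≤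
      (4 * (8 * κ + 1) / (Fintype.card ι : ℝ)) * ∑ i, ‖c i‖ ^ 2
      + (4 * (8 * κ + 1) / (Fintype.card ι : ℝ)) * ∑ i, ‖p i‖ ^ 2
      + (32 * κ / (Fintype.card ι : ℝ)) * ∑ i, ‖m i‖ ^ 2
      + 4 * ‖vhat - qhat‖ ^ 2 + 32 * κ * ζ ^ 2 := by
  rw [one_div] at hghat hvhat hhet
  rw [div_eq_mul_inv] at hrobust
  simp only [div_eq_mul_inv]
  set n : ℝ := (Fintype.card ι : ℝ)
  have hdecomp : a - qhat = (a - ghat) + n⁻¹ • ∑ i, c i + n⁻¹ • ∑ i, p i + (vhat - qhat) := by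
    have : ghat - vhat = n⁻¹ • ∑ i, c i + n⁻¹ • ∑ i, p i := by
      simp only [hghat, hvhat, ← smul_sub, ← smul_add, ← sum_sub_distrib, ← sum_add_distrib, hc,
        hp, sub_add_sub_cancel]
    rw [add_assoc (a - ghat), ← this]; abel
  have hspread : ∑ i, ‖g i - ghat‖ ^ 2 ≤ 4 * (∑ i, ‖c i‖ ^ 2 + ∑ i, ‖p i‖ ^ 2
      + ∑ i, ‖m i‖ ^ 2 + ∑ i, ‖q i - qhat‖ ^ 2) := by
    have (i : ι) : g i - qhat = c i + p i + m i + (q i - qhat) := by rw [hc, hp, hm]; abel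
    refine (hghat ▸ sum_norm_sub_mean_sq_le g qhat).trans ?_
    simpa only [this] using sum_norm_add_add_add_sq_le univ c p m (q · - qhat)
  calc ‖a - qhat‖ ^ 2
      ≤ 4 * (‖a - ghat‖ ^ 2 + ‖n⁻¹ • ∑ i, c i‖ ^ 2 + ‖n⁻¹ • ∑ i, p i‖ ^ 2 + ‖vhat - qhat‖ ^ 2) :=
        hdecomp ▸ norm_add_add_add_sq_le ..
    _ ≤ 4 * (κ * n⁻¹ * (4 * (∑ i, ‖c i‖ ^ 2 + ∑ i, ‖p i‖ ^ 2 + ∑ i, ‖m i‖ ^ 2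
          + ∑ i, ‖q i - qhat‖ ^ 2)) + n⁻¹ * ∑ i, ‖c i‖ ^ 2 + n⁻¹ * ∑ i, ‖p i‖ ^ 2
          + ‖vhat - qhat‖ ^ 2) := by
        gcongr
        · exact hrobust.trans (mul_le_mul_of_nonneg_left hspread (by positivity))
        · exact norm_mean_sq_le c
        · exact norm_mean_sq_le p
    _ ≤ _ := by
        have : 0 ≤ κ * n⁻¹ * ∑ i, ‖c i‖ ^ 2 := by positivity
        have : 0 ≤ κ * n⁻¹ * ∑ i, ‖p i‖ ^ 2 := by positivity
        have : 0 ≤ κ * n⁻¹ * ∑ i, ‖m i‖ ^ 2 := by positivity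
        have : 0 ≤ κ * ζ ^ 2 := by positivity
        linarith [mul_le_mul_of_nonneg_left hhet hκ]

/-- Per-iteration deviation bound between the robustly aggregated vector `a`
and the average honest gradient `qhat`. -/
theorem stmt_4 {E : Type*} [NormedAddCommGroup E] [InnerProductSpace ℝ E]
    {ι : Type*} [Fintype ι] (hG : 1 ≤ Fintype.card ι)
    (κ ζ : ℝ) (hκ : 0 ≤ κ) (hζ : 0 ≤ ζ)
    (g u v q : ι → E) (a : E)
    (c p m : ι → E)
    (hc : ∀ i, c i = g i - u i) (hp : ∀ i, p i = u i - v i)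
    (hm : ∀ i, m i = v i - q i)
    (ghat vhat qhat : E)
    (hghat : ghat = (1 / (Fintype.card ι : ℝ)) • ∑ i, g i)
    (hvhat : vhat = (1 / (Fintype.card ι : ℝ)) • ∑ i, v i)
    (hqhat : qhat = (1 / (Fintype.card ι : ℝ)) • ∑ i, q i)
    (hhet : (1 / (Fintype.card ι : ℝ)) * ∑ i, ‖q i - qhat‖ ^ 2 ≤ ζ ^ 2)
    (hrobust : ‖a - ghat‖ ^ 2 ≤ (κ / (Fintype.card ι : ℝ)) * ∑ i, ‖g i - ghat‖ ^ 2) :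
    ‖a - qhat‖ ^ 2 ≤
      (4 * (8 * κ + 1) / (Fintype.card ι : ℝ)) * ∑ i, ‖c i‖ ^ 2
      + (4 * (8 * κ + 1) / (Fintype.card ι : ℝ)) * ∑ i, ‖p i‖ ^ 2
      + (32 * κ / (Fintype.card ι : ℝ)) * ∑ i, ‖m i‖ ^ 2
      + 4 * ‖vhat - qhat‖ ^ 2 + 32 * κ * ζ ^ 2 :=
  stmt_4_general κ ζ hκ g u v q a c p m hc hp hm ghat vhat qhat hghat hvhat hhet hrobust
end

section
/- Let (Ω, μ) be a probability space and E a real inner product space. Let f : E → ℝ be differentiable with L-Lipschitz gradient, let G ≥ 1 be an integer, x, x', v̄ ∈ E, η ∈ (0,1], σ ≥ 0. Let G_1, …, G_G : Ω → E be Bochner-integrable, independent random vectors such that (1/G)·Σ_i ∫ G_i dμ = ∇f(x') and ∫ ‖G_i − ∫G_i dμ‖² dμ ≤ σ² for every i. Define v̄'(ω) = (1−η)·v̄ + η·(1/G)·Σ_i G_i(ω). Then ∫ ‖v̄' − ∇f(x')‖² dμ ≤ (1−η)·‖v̄ − ∇f(x)‖² + (L²/η)·‖x' − x‖² + η²·σ²/G.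 -/
/-!
Write `v̄' - ∇f(x') = (1 - η)(v̄ - ∇f(x')) + η · A`, where `A` is the average of the centred
gradients `Gᵢ - 𝔼 Gᵢ`. The noise `A` has mean zero, so it is uncorrelated with the constant bias
term and the two squared norms add; independence makes the cross terms of `‖A‖²` vanish, giving
`𝔼‖A‖² ≤ σ²/n` for `n` workers. The bias is controlled by the triangle inequality through
`∇f(x)`, Young's inequality with weight `η`, and the Lipschitz bound
`‖∇f(x) - ∇f(x')‖ ≤ L‖x - x'‖`.
-/

open MeasureTheory ProbabilityTheory
open scoped RealInnerProductSpace

section SquaredNorm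

variable {Ω E : Type*} [MeasurableSpace Ω] {μ : Measure Ω}
  [NormedAddCommGroup E] [InnerProductSpace ℝ E]

/- If `‖X + Y‖²` is not integrable, the left side is the junk value `0`; otherwise the integrable
cross term forces `‖X‖²` and `‖Y‖²` to be integrable, and equality holds. -/
theorem integral_norm_add_sq_le_of_integral_inner_eq_zero {X Y : Ω → E}
    (hX : AEStronglyMeasurable X μ) (hY : AEStronglyMeasurable Y μ)
    (hXY : Integrable (fun ω => ⟪X ω, Y ω⟫) μ) (hXY₀ : ∫ ω, ⟪X ω, Y ω⟫ ∂μ = 0) :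
    ∫ ω, ‖X ω + Y ω‖ ^ 2 ∂μ ≤ ∫ ω, ‖X ω‖ ^ 2 ∂μ + ∫ ω, ‖Y ω‖ ^ 2 ∂μ := by
  by_cases hsq : Integrable (fun ω => ‖X ω + Y ω‖ ^ 2) μ
  swap
  · rw [integral_undef hsq]
    exact add_nonneg (integral_nonneg fun _ => sq_nonneg _) (integral_nonneg fun _ => sq_nonneg _)
  have hsum : Integrable (fun ω => ‖X ω‖ ^ 2 + ‖Y ω‖ ^ 2) μ :=
    (hsq.sub (hXY.const_mul 2)).congr
      (Filter.Eventually.of_forall fun ω => by simp only [Pi.sub_apply, norm_add_sq_real]; ring)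
  have hXsq : Integrable (fun ω => ‖X ω‖ ^ 2) μ :=
    hsum.mono' (hX.norm.pow 2) (Filter.Eventually.of_forall fun ω => by
      rw [Real.norm_of_nonneg (sq_nonneg _)]; linarith [sq_nonneg ‖Y ω‖])
  have hYsq : Integrable (fun ω => ‖Y ω‖ ^ 2) μ :=
    hsum.mono' (hY.norm.pow 2) (Filter.Eventually.of_forall fun ω => by
      rw [Real.norm_of_nonneg (sq_nonneg _)]; linarith [sq_nonneg ‖X ω‖])
  refine le_of_eq ?_
  calc ∫ ω, ‖X ω + Y ω‖ ^ 2 ∂μ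
      = ∫ ω, (‖X ω‖ ^ 2 + 2 * ⟪X ω, Y ω⟫ + ‖Y ω‖ ^ 2) ∂μ := by simp only [norm_add_sq_real]
    _ = ∫ ω, ‖X ω‖ ^ 2 ∂μ + 2 * ∫ ω, ⟪X ω, Y ω⟫ ∂μ + ∫ ω, ‖Y ω‖ ^ 2 ∂μ := by
      rw [integral_add _ hYsq, integral_add hXsq (hXY.const_mul 2), integral_const_mul]
      exact hXsq.add (hXY.const_mul 2)
    _ = ∫ ω, ‖X ω‖ ^ 2 ∂μ + ∫ ω, ‖Y ω‖ ^ 2 ∂μ := by rw [hXY₀]; ring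

variable [CompleteSpace E]

theorem integral_norm_const_add_sq_le [IsProbabilityMeasure μ] (c : E) {Y : Ω → E}
    (hY : Integrable Y μ) (hY₀ : μ[Y] = 0) :
    ∫ ω, ‖c + Y ω‖ ^ 2 ∂μ ≤ ‖c‖ ^ 2 + ∫ ω, ‖Y ω‖ ^ 2 ∂μ := by
  simpa using integral_norm_add_sq_le_of_integral_inner_eq_zero aestronglyMeasurable_const hY.1
    (hY.const_inner c) (by rw [integral_inner hY, hY₀, inner_zero_right])

variable [MeasurableSpace E] [BorelSpace E]

theorem integral_norm_sum_sq_le_of_pairwise_indepFun {ι : Type*} {Y : ι → Ω → E}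
    (hindep : Pairwise fun i j => Y i ⟂ᵢ[μ] Y j)
    (hY : ∀ i, Integrable (Y i) μ) (hY₀ : ∀ i, μ[Y i] = 0) (s : Finset ι) :
    ∫ ω, ‖∑ i ∈ s, Y i ω‖ ^ 2 ∂μ ≤ ∑ i ∈ s, ∫ ω, ‖Y i ω‖ ^ 2 ∂μ := by
  classical
  induction s using Finset.induction_on with
  | empty => simp
  | insert j s hj ih =>
    have hne : ∀ i ∈ s, i ≠ j := fun i hi h => hj (h ▸ hi)
    have hcross : ∀ i ∈ s, Integrable (fun ω => ⟪Y i ω, Y j ω⟫) μ := fun i hi =>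
      (hindep (hne i hi)).integrable_bilin (hY i) (hY j) (innerSL ℝ)
    have hcross₀ : ∀ i ∈ s, ∫ ω, ⟪Y i ω, Y j ω⟫ ∂μ = 0 := fun i hi =>
      ((hindep (hne i hi)).integral_bilin (hY i) (hY j) (innerSL ℝ)).trans (by simp [hY₀ j])
    calc ∫ ω, ‖∑ i ∈ insert j s, Y i ω‖ ^ 2 ∂μ
        = ∫ ω, ‖∑ i ∈ s, Y i ω + Y j ω‖ ^ 2 ∂μ := by simp only [Finset.sum_insert hj, add_comm]
      _ ≤ ∫ ω, ‖∑ i ∈ s, Y i ω‖ ^ 2 ∂μ + ∫ ω, ‖Y j ω‖ ^ 2 ∂μ := by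
        refine integral_norm_add_sq_le_of_integral_inner_eq_zero
          (integrable_finsetSum s fun i _ => hY i).1 (hY j).1 ?_ ?_
        · simpa only [sum_inner] using integrable_finsetSum s hcross
        · simp only [sum_inner]
          rw [integral_finsetSum s hcross]
          exact Finset.sum_eq_zero hcross₀
      _ ≤ ∑ i ∈ insert j s, ∫ ω, ‖Y i ω‖ ^ 2 ∂μ := by
        rw [Finset.sum_insert hj, add_comm]; gcongr

theorem integral_norm_average_sq_le_of_pairwise_indepFun {ι : Type*} [Fintype ι] {Y : ι → Ω → E}
    (hindep : Pairwise fun i j => Y i ⟂ᵢ[μ] Y j) (hY : ∀ i, Integrable (Y i) μ)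
    (hY₀ : ∀ i, μ[Y i] = 0) {C : ℝ}
    (hvar : ∀ i, ∫ ω, ‖Y i ω‖ ^ 2 ∂μ ≤ C) :
    ∫ ω, ‖(1 / (Fintype.card ι : ℝ)) • ∑ i, Y i ω‖ ^ 2 ∂μ ≤ C / Fintype.card ι := by
  calc ∫ ω, ‖(1 / (Fintype.card ι : ℝ)) • ∑ i, Y i ω‖ ^ 2 ∂μ
      = (1 / (Fintype.card ι : ℝ)) ^ 2 * ∫ ω, ‖∑ i, Y i ω‖ ^ 2 ∂μ := by
        simp only [norm_smul, mul_pow, Real.norm_eq_abs, sq_abs, integral_const_mul]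
    _ ≤ (1 / (Fintype.card ι : ℝ)) ^ 2 * ∑ _i : ι, C := by
        gcongr
        exact (integral_norm_sum_sq_le_of_pairwise_indepFun hindep hY hY₀ _).trans
          (Finset.sum_le_sum fun i _ => hvar i)
    _ = C / Fintype.card ι := by
        simp only [Finset.sum_const, Finset.card_univ, nsmul_eq_mul]
        field_simp

end SquaredNorm

theorem one_sub_sq_mul_add_sq_le {η a b : ℝ} (hη : 0 < η) (hη₁ : η ≤ 1) :
    (1 - η) ^ 2 * (a + b) ^ 2 ≤ (1 - η) * a ^ 2 + b ^ 2 / η := by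
  rw [← sub_nonneg]
  have key : (1 - η) * a ^ 2 + b ^ 2 / η - (1 - η) ^ 2 * (a + b) ^ 2
      = ((1 - η) * (η * a - (1 - η) * b) ^ 2 + (1 - (1 - η) ^ 2) * b ^ 2) / η := by
    field_simp; ring
  rw [key]
  have : 0 ≤ 1 - (1 - η) ^ 2 := by nlinarith
  positivity

theorem norm_one_sub_smul_sub_sq_le {E : Type*} [SeminormedAddCommGroup E] [NormedSpace ℝ E]
    {η : ℝ} (hη : 0 < η) (hη₁ : η ≤ 1) (u v w : E) :
    ‖(1 - η) • (u - w)‖ ^ 2 ≤ (1 - η) * ‖u - v‖ ^ 2 + ‖v - w‖ ^ 2 / η := by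
  calc ‖(1 - η) • (u - w)‖ ^ 2 = (1 - η) ^ 2 * ‖u - w‖ ^ 2 := by
        rw [norm_smul, Real.norm_of_nonneg (sub_nonneg.2 hη₁), mul_pow]
    _ ≤ (1 - η) ^ 2 * (‖u - v‖ + ‖v - w‖) ^ 2 := by
        gcongr
        exact norm_sub_le_norm_sub_add_norm_sub u v w
    _ ≤ (1 - η) * ‖u - v‖ ^ 2 + ‖v - w‖ ^ 2 / η := one_sub_sq_mul_add_sq_le hη hη₁

theorem stmt_6_general {Ω : Type*} [MeasurableSpace Ω] (μ : Measure Ω)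
    [IsProbabilityMeasure μ]
    {E : Type*} [NormedAddCommGroup E] [InnerProductSpace ℝ E] [CompleteSpace E]
    [MeasurableSpace E] [BorelSpace E]
    (f : E → ℝ) (L : ℝ)
    (hlip : ∀ x y, ‖gradient f x - gradient f y‖ ≤ L * ‖x - y‖)
    (n : ℕ)
    (x x' vbar : E) (η σ : ℝ) (hη : 0 < η) (hη1 : η ≤ 1)
    (G : Fin n → Ω → E) (hGint : ∀ i, Integrable (G i) μ)
    (hindep : ProbabilityTheory.iIndepFun G μ)
    (hGmean : (1 / (n : ℝ)) • ∑ i, ∫ ω, G i ω ∂μ = gradient f x')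
    (hGvar : ∀ i, ∫ ω, ‖G i ω - ∫ ω', G i ω' ∂μ‖ ^ 2 ∂μ ≤ σ ^ 2)
    (vbar' : Ω → E)
    (hvbar' : ∀ ω, vbar' ω = (1 - η) • vbar + η • ((1 / (n : ℝ)) • ∑ i, G i ω)) :
    ∫ ω, ‖vbar' ω - gradient f x'‖ ^ 2 ∂μ ≤
      (1 - η) * ‖vbar - gradient f x‖ ^ 2 + (L ^ 2 / η) * ‖x' - x‖ ^ 2
        + η ^ 2 * σ ^ 2 / n := by
  set Y : Fin n → Ω → E := fun i ω => G i ω - ∫ ω', G i ω' ∂μ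
  set A : Ω → E := fun ω => (1 / (n : ℝ)) • ∑ i, Y i ω
  have hYint : ∀ i, Integrable (Y i) μ := fun i => (hGint i).sub (integrable_const _)
  have hY₀ : ∀ i, μ[Y i] = 0 := fun i => by simp [Y, integral_sub (hGint i) (integrable_const _)]
  have hYindep : Pairwise fun i j => Y i ⟂ᵢ[μ] Y j := fun i j hij =>
    (hindep.indepFun hij).comp (measurable_id.sub_const _) (measurable_id.sub_const _)
  have hAint : Integrable A μ := (integrable_finsetSum Finset.univ fun i _ => hYint i).smul _
  have hA₀ : μ[A] = 0 := by simp [A, integral_smul, integral_finsetSum _ fun i _ => hYint i, hY₀]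
  have hdecomp : ∀ ω, vbar' ω - gradient f x' = (1 - η) • (vbar - gradient f x') + η • A ω := by
    intro ω
    rw [hvbar', ← hGmean]
    simp only [A, Y, Finset.sum_sub_distrib]
    module
  have hnoise : ∫ ω, ‖η • A ω‖ ^ 2 ∂μ ≤ η ^ 2 * σ ^ 2 / n := by
    simp only [norm_smul, mul_pow, Real.norm_eq_abs, sq_abs, integral_const_mul, mul_div_assoc]
    gcongr
    simpa [A] using integral_norm_average_sq_le_of_pairwise_indepFun hYindep hYint hY₀ hGvar
  have hbias : ‖gradient f x - gradient f x'‖ ^ 2 / η ≤ L ^ 2 / η * ‖x' - x‖ ^ 2 := by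
    rw [div_mul_eq_mul_div, ← mul_pow, norm_sub_rev x']
    gcongr
    exact hlip x x'
  calc ∫ ω, ‖vbar' ω - gradient f x'‖ ^ 2 ∂μ
      = ∫ ω, ‖(1 - η) • (vbar - gradient f x') + η • A ω‖ ^ 2 ∂μ := by simp only [hdecomp]
    _ ≤ ‖(1 - η) • (vbar - gradient f x')‖ ^ 2 + ∫ ω, ‖η • A ω‖ ^ 2 ∂μ :=
      integral_norm_const_add_sq_le _ (hAint.smul η) (by rw [integral_smul, hA₀, smul_zero])
    _ ≤ _ := by
      linarith [norm_one_sub_smul_sub_sq_le hη hη1 vbar (gradient f x) (gradient f x')]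

/-- One-step averaged momentum deviation bound for `G` independent workers:
the variance of the averaged unbiased stochastic gradient is `σ²/G`, so the
momentum recursion `v̄' = (1-η)•v̄ + η•(average of Gᵢ)` contracts with noise
term `η²σ²/G`. -/
theorem stmt_6 {Ω : Type*} [MeasurableSpace Ω] (μ : Measure Ω)
    [IsProbabilityMeasure μ]
    {E : Type*} [NormedAddCommGroup E] [InnerProductSpace ℝ E] [CompleteSpace E]
    [MeasurableSpace E] [BorelSpace E]
    (f : E → ℝ) (L : ℝ) (hL : 0 ≤ L)
    (hdiff : Differentiable ℝ f)
    (hlip : ∀ x y, ‖gradient f x - gradient f y‖ ≤ L * ‖x - y‖)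
    (n : ℕ) (hn : 1 ≤ n)
    (x x' vbar : E) (η σ : ℝ) (hη : 0 < η) (hη1 : η ≤ 1) (hσ : 0 ≤ σ)
    (G : Fin n → Ω → E) (hGint : ∀ i, Integrable (G i) μ)
    (hindep : ProbabilityTheory.iIndepFun G μ)
    (hGmean : (1 / (n : ℝ)) • ∑ i, ∫ ω, G i ω ∂μ = gradient f x')
    (hGvar : ∀ i, ∫ ω, ‖G i ω - ∫ ω', G i ω' ∂μ‖ ^ 2 ∂μ ≤ σ ^ 2)
    (vbar' : Ω → E)
    (hvbar' : ∀ ω, vbar' ω = (1 - η) • vbar + η • ((1 / (n : ℝ)) • ∑ i, G i ω)) :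
    ∫ ω, ‖vbar' ω - gradient f x'‖ ^ 2 ∂μ ≤
      (1 - η) * ‖vbar - gradient f x‖ ^ 2 + (L ^ 2 / η) * ‖x' - x‖ ^ 2
        + η ^ 2 * σ ^ 2 / n :=
  stmt_6_general μ f L hlip n x x' vbar η σ hη hη1 G hGint hindep hGmean hGvar vbar' hvbar'
end
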